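/- arXiv:1401.6000 — 3 statements merged into one kernel-verified Lean document; each statement's English description precedes it below -/
import Mathlib

section
/- Let G = (V, E) be a strongly connected directed graph, v ∈ V, and let C be a 2-vertex-connected component of G with v ∈ C. Then every vertex of C \ {v} is a direct successor (child) of v in the dominator tree DT(v) of the flowgraph G(v); that is, imd(x) = v for all x ∈ C \ {v}. -/
variable {V : Type*}

/-- Reachability inside the induced subgraph on `S` of the digraph with edge relation `E`. -/
def ReachIn (E : V → V → Prop) (S : Set V) : V → V → Prop :=
  Relation.ReflTransGen (fun a b => a ∈ S ∧ b ∈ S ∧ E a b)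

/-- The induced subgraph on `S` is strongly connected. -/
def SCOn (E : V → V → Prop) (S : Set V) : Prop :=
  ∀ u ∈ S, ∀ w ∈ S, ReachIn E S u w

/-- `C` is a `k`-vertex-connected vertex set: `|C| ≥ k+1` and removing any fewer than `k`
vertices leaves the induced subgraph strongly connected. -/
def IsKVCSet (E : V → V → Prop) (k : ℕ) (C : Set V) : Prop :=
  k + 1 ≤ C.ncard ∧ ∀ Y ⊆ C, Y.ncard < k → SCOn E (C \ Y)

/-- `C` is a `2`-vertex-connected vertex set. -/
def IsTwoVCSet (E : V → V → Prop) (C : Set V) : Prop :=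
  3 ≤ C.ncard ∧ ∀ w ∈ C, SCOn E (C \ {w})

/-- A `2`-vertex-connected component: a maximal `2`-vertex-connected vertex set. -/
def IsTwoVCC (E : V → V → Prop) (C : Set V) : Prop :=
  IsTwoVCSet E C ∧ ∀ D, IsTwoVCSet E D → C ⊆ D → D = C

/-- A `k`-vertex-connected component: a maximal `k`-vertex-connected vertex set. -/
def IsKVCC (E : V → V → Prop) (k : ℕ) (C : Set V) : Prop :=
  IsKVCSet E k C ∧ ∀ D, IsKVCSet E k D → C ⊆ D → D = C

/-- `C` is a strongly connected component of the induced subgraph on `S`. -/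
def IsSCCOn (E : V → V → Prop) (S C : Set V) : Prop :=
  C ⊆ S ∧ C.Nonempty ∧ (∀ u ∈ C, ∀ w ∈ C, ReachIn E S u w) ∧
    ∀ D, C ⊆ D → D ⊆ S → (∀ u ∈ D, ∀ w ∈ D, ReachIn E S u w) → D = C

/-- `p` is a (directed) walk from `u` to `w`, given as the list of its vertices. -/
def IsWalk (E : V → V → Prop) (u w : V) (p : List V) : Prop :=
  p.head? = some u ∧ p.getLast? = some w ∧ p.Chain' E

/-- `p` is a (directed, simple) path from `u` to `w`. -/
def IsPath (E : V → V → Prop) (u w : V) (p : List V) : Prop :=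
  IsWalk E u w p ∧ p.Nodup

/-- In the flowgraph with start vertex `v`, vertex `u` dominates vertex `x`:
every walk from `v` to `x` contains `u`. -/
def Dominates (E : V → V → Prop) (v u x : V) : Prop :=
  ∀ p, IsWalk E v x p → u ∈ p

/-- `u` is a non-trivial dominator in the flowgraph with start vertex `v`. -/
def NontrivDom (E : V → V → Prop) (v u : V) : Prop :=
  ∃ x, x ≠ v ∧ x ≠ u ∧ Dominates E v u x

/-- `u` is the immediate dominator of `x` in the flowgraph with start vertex `v`:
`u` is a dominator of `x` other than `x`, and every dominator of `x` other than `x`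
dominates `u`.  Equivalently, `x` is a child of `u` in the dominator tree. -/
def IsImd (E : V → V → Prop) (v u x : V) : Prop :=
  Dominates E v u x ∧ u ≠ x ∧
    ∀ d, Dominates E v d x → d ≠ x → Dominates E v d u

/-- `w` is a strong articulation point of the digraph `E`: its removal increases the
number of strongly connected components, i.e. some two vertices `u, x ≠ w` lie in a
common strongly connected component of `E` but not of `E` with `w` removed. -/
def IsSAP (E : V → V → Prop) (w : V) : Prop :=
  ∃ u x : V, u ≠ w ∧ x ≠ w ∧ ReachIn E Set.univ u x ∧ ReachIn E Set.univ x u ∧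
    ¬(ReachIn E ({w} : Set V)ᶜ u x ∧ ReachIn E ({w} : Set V)ᶜ x u)


lemma reach_walk {E : V → V → Prop} {S : Set V} {u w : V}
    (h : ReachIn E S u w) (hu : u ∈ S) :
    ∃ p, IsWalk E u w p ∧ ∀ a ∈ p, a ∈ S := by
  induction h with
  | refl => exact ⟨[u], ⟨rfl, rfl, List.isChain_singleton u⟩, by simpa using hu⟩
  | @tail b c _ hbc ih =>
    obtain ⟨p, ⟨hh, hl, hc⟩, hS⟩ := ih
    have hpne : p ≠ [] := by intro h; simp [h] at hh
    refine ⟨p ++ [c], ⟨?_, ?_, ?_⟩, ?_⟩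
    · rwa [List.head?_append_of_ne_nil _ hpne]
    · simp
    · refine List.IsChain.append hc (List.isChain_singleton c) ?_
      intro a ha y hy
      have ha' : a = b := by
        rw [hl] at ha; exact (by simpa using ha : b = a).symm
      have hy' : y = c := (by simpa using hy : c = y).symm
      rw [ha', hy']; exact hbc.2.2
    · intro a ha
      rcases List.mem_append.1 ha with h1 | h1
      · exact hS a h1
      · simp at h1; rw [h1]; exact hbc.2.1

/-- If `C` is a 2-vertex-connected component of a strongly connected digraph `G` with
`v ∈ C`, then every vertex of `C \ {v}` is a child of `v` in the dominator tree of the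
flowgraph `G(v)`, i.e. `imd(x) = v`. -/
theorem stmt6 (E : V → V → Prop) (hSC : SCOn E Set.univ) (v : V) (C : Set V)
    (hC : IsTwoVCC E C) (hv : v ∈ C) :
    ∀ x ∈ C \ {v}, IsImd E v v x := by
  intro x hx
  obtain ⟨hxC, hxv⟩ := hx
  have hxv' : x ≠ v := hxv
  obtain ⟨⟨hcard, h2⟩, _⟩ := hC
  refine ⟨fun p hp => List.mem_of_mem_head? (by rw [hp.1]; rfl), fun h => hxv' h.symm, ?_⟩
  intro d hd hdx
  by_cases hdv : d = v
  · subst hdv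
    exact fun p hp => List.mem_of_mem_head? (by rw [hp.1]; rfl)
  exfalso
  -- find a walk from v to x avoiding d
  by_cases hdC : d ∈ C
  · have hreach := h2 d hdC v ⟨hv, by simpa using (Ne.symm hdv)⟩ x ⟨hxC, by simpa using (Ne.symm hdx)⟩
    obtain ⟨p, hw, hS⟩ := reach_walk hreach ⟨hv, by simpa using (Ne.symm hdv)⟩
    have := hS d (hd p hw)
    exact this.2 rfl
  · have hex : ∃ w ∈ C, w ≠ v ∧ w ≠ x := by
      by_contra h
      push_neg at h
      have hsub : C ⊆ {v, x} := by
        intro a ha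
        rcases Classical.em (a = v) with h1 | h1
        · exact Or.inl h1
        · exact Or.inr (h a ha h1)
      have : C.ncard ≤ 2 := le_trans (Set.ncard_le_ncard hsub (Set.toFinite _))
        (le_trans (Set.ncard_insert_le _ _) (by simp))
      omega
    obtain ⟨w, hwC, hwv, hwx⟩ := hex
    have hreach := h2 w hwC v ⟨hv, by simpa using (Ne.symm hwv)⟩ x ⟨hxC, by simpa using (Ne.symm hwx)⟩
    obtain ⟨p, hw', hS⟩ := reach_walk hreach ⟨hv, by simpa using (Ne.symm hwv)⟩
    exact hdC (hS d (hd p hw')).1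
end

section
/- Let G = (V, E) be a strongly connected directed graph, v ∈ V, and let C be a 2-vertex-connected component of G with v ∉ C. Then either there exists a vertex w ∉ C such that all vertices of C are children of w in the dominator tree DT(v) of G(v), or there exists a vertex w ∈ C such that all vertices of C \ {w} are children of w in DT(v). -/
variable {V : Type*}

section Aux

variable {E : V → V → Prop} {S T : Set V} {a b x u v : V}

theorem reach_mono (hST : S ⊆ T) (h : ReachIn E S a b) : ReachIn E T a b :=
  Relation.ReflTransGen.mono (r := fun a b => a ∈ S ∧ b ∈ S ∧ E a b)
    (p := fun a b => a ∈ T ∧ b ∈ T ∧ E a b) (fun _ _ h => ⟨hST h.1, hST h.2.1, h.2.2⟩) _ _ h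

theorem reach_src (h : ReachIn E S a b) : a = b ∨ a ∈ S := by
  rcases Relation.ReflTransGen.cases_head h with h | ⟨c, ⟨ha, _, _⟩, _⟩
  · exact Or.inl h
  · exact Or.inr ha

theorem walk_of_reach (h : ReachIn E S a b) (ha : a ∈ S) :
    ∃ p, IsWalk E a b p ∧ ∀ y ∈ p, y ∈ S := by
  induction h with
  | refl => exact ⟨[a], ⟨rfl, rfl, List.isChain_singleton a⟩, by simpa using ha⟩
  | @tail c d _ hcd ih =>
    obtain ⟨hcS, hdS, hE⟩ := hcd
    obtain ⟨p, ⟨hh, hl, hch⟩, hmem⟩ := ih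
    have hpne : p ≠ [] := by rintro rfl; simp at hh
    refine ⟨p ++ [d], ⟨?_, ?_, ?_⟩, ?_⟩
    · rwa [List.head?_append_of_ne_nil _ hpne]
    · simp [List.getLast?_concat]
    · refine List.isChain_append.mpr ⟨hch, List.isChain_singleton d, ?_⟩
      intro z hz w hw
      simp only [List.head?_cons, Option.mem_def, Option.some.injEq] at hw
      subst hw
      rw [hl] at hz
      simp only [Option.mem_def, Option.some.injEq] at hz
      subst hz
      exact hE
    · intro z hz
      rcases List.mem_append.mp hz with h | h
      · exact hmem z h
      · simp only [List.mem_singleton] at h; subst h; exact hdS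

theorem reach_of_walk :
    ∀ (p : List V) (a b : V), IsWalk E a b p → (∀ y ∈ p, y ∈ S) → ReachIn E S a b := by
  intro p
  induction p with
  | nil => intro a b hw _; obtain ⟨hh, _, _⟩ := hw; simp at hh
  | cons w t ih =>
    intro a b hw hmem
    obtain ⟨hh, hl, hc⟩ := hw
    have haw : a = w := by
      simp only [List.head?_cons, Option.some.injEq] at hh; exact hh.symm
    subst haw
    cases t with
    | nil =>
      have hab : a = b := by simpa using hl
      subst hab
      exact Relation.ReflTransGen.refl
    | cons y t' =>
      obtain ⟨hE, hc'⟩ := List.isChain_cons_cons.mp hc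
      have hyb : ReachIn E S y b :=
        ih y b ⟨rfl, by simpa using hl, hc'⟩
          (fun z hz => hmem z (List.mem_cons_of_mem _ hz))
      exact Relation.ReflTransGen.head
        ⟨hmem a (by simp), hmem y (by simp), hE⟩ hyb

theorem dom_self : Dominates E v u u := by
  intro p hp
  exact List.mem_of_mem_getLast? (by rw [hp.2.1]; rfl)

theorem dom_start : Dominates E v v x := by
  intro p hp
  exact List.mem_of_mem_head? (by rw [hp.1]; rfl)

theorem notDom_iff : ¬ Dominates E v u x ↔ v ≠ u ∧ ReachIn E ({u} : Set V)ᶜ v x := by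
  constructor
  · intro h
    simp only [Dominates, not_forall] at h
    obtain ⟨p, hw, hu⟩ := h
    have hmem : ∀ y ∈ p, y ∈ ({u} : Set V)ᶜ := by
      intro y hy
      simp only [Set.mem_compl_iff, Set.mem_singleton_iff]
      rintro rfl; exact hu hy
    have hvp : v ∈ p := List.mem_of_mem_head? (by rw [hw.1]; rfl)
    have hvu : v ≠ u := by
      have := hmem v hvp
      simpa using this
    exact ⟨hvu, reach_of_walk p v x hw hmem⟩
  · rintro ⟨hvu, hr⟩ hdom
    obtain ⟨p, hw, hmem⟩ := walk_of_reach hr (by simpa using hvu)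
    have := hmem u (hdom p hw)
    simp at this

theorem reach_through (u : V) (h : ReachIn E S a x) :
    ReachIn E (S \ {u}) a x ∨ (ReachIn E S a u ∧ ReachIn E S u x) := by
  induction h using Relation.ReflTransGen.head_induction_on with
  | refl => exact Or.inl Relation.ReflTransGen.refl
  | @head a b hab hbx ih =>
    obtain ⟨haS, hbS, hE⟩ := hab
    rcases ih with hb | ⟨hbu, hux⟩
    · by_cases hau : a = u
      · subst hau
        exact Or.inr ⟨Relation.ReflTransGen.refl,
          Relation.ReflTransGen.head ⟨haS, hbS, hE⟩ hbx⟩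
      · by_cases hbu : b = u
        · rcases reach_src hb with hbex | hmem
          · refine Or.inr ⟨Relation.ReflTransGen.single ⟨haS, hbu ▸ hbS, hbu ▸ hE⟩, ?_⟩
            rw [← hbu, hbex]
            exact Relation.ReflTransGen.refl
          · exact absurd hmem (by simp [hbu])
        · exact Or.inl (Relation.ReflTransGen.head
            ⟨⟨haS, hau⟩, ⟨hbS, hbu⟩, hE⟩ hb)
    · exact Or.inr ⟨Relation.ReflTransGen.head ⟨haS, hbS, hE⟩ hbu, hux⟩

theorem reach_last_exit (h : ReachIn E S a x) (hx : x ≠ u) :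
    ReachIn E (S \ {u}) a x ∨ ∃ b, b ∈ S ∧ b ≠ u ∧ E u b ∧ ReachIn E (S \ {u}) b x := by
  induction h using Relation.ReflTransGen.head_induction_on with
  | refl => exact Or.inl Relation.ReflTransGen.refl
  | @head a b hab hbx ih =>
    obtain ⟨haS, hbS, hE⟩ := hab
    rcases ih with hb | hright
    · have hbu : b ≠ u := by
        rcases reach_src hb with rfl | hmem
        · exact hx
        · intro h; exact hmem.2 (by simp [h])
      by_cases hau : a = u
      · exact Or.inr ⟨b, hbS, hbu, by rwa [hau] at hE, hb⟩
      · exact Or.inl (Relation.ReflTransGen.head ⟨⟨haS, hau⟩, ⟨hbS, hbu⟩, hE⟩ hb)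
    · exact Or.inr hright

theorem dom_trans {d e : V} (h1 : Dominates E v d e) (h2 : Dominates E v e x) :
    Dominates E v d x := by
  by_contra hnd
  rw [notDom_iff] at hnd
  obtain ⟨hvd, hr⟩ := hnd
  by_cases hxe : x = e
  · subst hxe
    exact notDom_iff.mpr ⟨hvd, hr⟩ h1
  have hve : v ≠ e := by
    rintro rfl
    have hd : d ∈ [v] := h1 [v] ⟨rfl, rfl, List.isChain_singleton v⟩
    simp only [List.mem_singleton] at hd
    exact hvd hd.symm
  rcases reach_through e hr with h' | ⟨hve', _⟩
  · have hsub : ({d} : Set V)ᶜ \ {e} ⊆ ({e} : Set V)ᶜ := by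
      intro z hz; exact hz.2
    exact notDom_iff.mpr ⟨hve, reach_mono hsub h'⟩ h2
  · exact notDom_iff.mpr ⟨hvd, hve'⟩ h1

theorem dom_extend (h : Dominates E v u x) (hyx : ReachIn E ({u} : Set V)ᶜ b x) :
    Dominates E v u b := by
  by_contra hn
  rw [notDom_iff] at hn
  exact notDom_iff.mpr ⟨hn.1, hn.2.trans hyx⟩ h

theorem dom_total {d1 d2 : V} (h1 : Dominates E v d1 x) (h2 : Dominates E v d2 x)
    (hx1 : x ≠ d1) (hx2 : x ≠ d2) (hd12 : d1 ≠ d2)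
    (hreach : ReachIn E Set.univ v x) :
    Dominates E v d1 d2 ∨ Dominates E v d2 d1 := by
  by_cases hv1 : v = d1
  · exact Or.inl (hv1 ▸ dom_start)
  by_cases hv2 : v = d2
  · exact Or.inr (hv2 ▸ dom_start)
  by_contra hc
  push_neg at hc
  obtain ⟨hn1, hn2⟩ := hc
  rw [notDom_iff] at hn1 hn2
  obtain ⟨_, R1⟩ := hn1
  obtain ⟨_, R2⟩ := hn2
  have hND1 : ¬ ReachIn E ({d1} : Set V)ᶜ v x := fun h => notDom_iff.mpr ⟨hv1, h⟩ h1
  have hND2 : ¬ ReachIn E ({d2} : Set V)ᶜ v x := fun h => notDom_iff.mpr ⟨hv2, h⟩ h2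
  have hsub1 : Set.univ \ {d1} ⊆ ({d1} : Set V)ᶜ := fun z hz => hz.2
  rcases reach_last_exit hreach hx1 with hA | ⟨b1, _, hb1u, hEb1, hB⟩
  · exact hND1 (reach_mono hsub1 hA)
  rcases reach_last_exit hB hx2 with hB1 | ⟨b2, hb2mem, hb2u, hEb2, hB2⟩
  · -- build a walk from v to x avoiding d2
    have hb1d2 : b1 ≠ d2 := by
      rcases reach_src hB1 with rfl | hmem
      · exact fun h => hx2 h
      · intro h; exact hmem.2 (by simp [h])
    have step : ReachIn E ({d2} : Set V)ᶜ d1 b1 :=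
      Relation.ReflTransGen.single ⟨by simpa using hd12, by simpa using hb1d2, hEb1⟩
    have tailr : ReachIn E ({d2} : Set V)ᶜ b1 x :=
      reach_mono (fun z hz => hz.2) hB1
    exact hND2 ((R2.trans step).trans tailr)
  · -- build a walk from v to x avoiding d1
    have hb2d1 : b2 ≠ d1 := fun h => hb2mem.2 (by simp [h])
    have step : ReachIn E ({d1} : Set V)ᶜ d2 b2 :=
      Relation.ReflTransGen.single ⟨by simpa using hd12.symm, by simpa using hb2d1, hEb2⟩
    have tailr : ReachIn E ({d1} : Set V)ᶜ b2 x :=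
      reach_mono (fun z hz => hz.1.2) hB2
    exact hND1 ((R1.trans step).trans tailr)

theorem exists_min {r : V → V → Prop} (htr : ∀ {a b c}, r a b → r b c → r a c) :
    ∀ (s : Finset V), s.Nonempty →
      (∀ a ∈ s, ∀ b ∈ s, a ≠ b → r a b ∨ r b a) →
      ∃ w ∈ s, ∀ d ∈ s, d ≠ w → r d w := by
  classical
  intro s
  induction s using Finset.induction_on with
  | empty => intro h; simp at h
  | @insert a s' hanotin ih =>
    intro _ htot
    rcases s'.eq_empty_or_nonempty with rfl | hs'
    · refine ⟨a, by simp, ?_⟩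
      intro d hd hda
      simp only [Finset.mem_insert, Finset.notMem_empty, or_false] at hd
      exact absurd hd hda
    · obtain ⟨w, hw, hmin⟩ := ih hs'
        (fun p hp q hq => htot p (by simp [hp]) q (by simp [hq]))
      have haw : a ≠ w := fun h => hanotin (h ▸ hw)
      rcases htot a (by simp) w (by simp [hw]) haw with hrw | hrwa
      · refine ⟨w, by simp [hw], ?_⟩
        intro d hd hdw
        rcases Finset.mem_insert.mp hd with rfl | hd'
        · exact hrw
        · exact hmin d hd' hdw
      · refine ⟨a, by simp, ?_⟩
        intro d hd hda
        rcases Finset.mem_insert.mp hd with rfl | hd'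
        · exact absurd rfl hda
        · by_cases hdw : d = w
          · exact hdw ▸ hrwa
          · exact htr (hmin d hd' hdw) hrwa

end Aux

/-- If `C` is a 2-vertex-connected component of a strongly connected digraph `G` with
`v ∉ C`, then either all vertices of `C` are children of some `w ∉ C` in the dominator
tree of `G(v)`, or all vertices of `C \ {w}` are children of some `w ∈ C`. -/
theorem stmt7 (E : V → V → Prop) (hSC : SCOn E Set.univ) (v : V) (C : Set V)
    (hC : IsTwoVCC E C) (hv : v ∉ C) :
    (∃ w ∉ C, ∀ x ∈ C, IsImd E v w x) ∨
    (∃ w ∈ C, ∀ x ∈ C \ {w}, IsImd E v w x) := by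
  classical
  obtain ⟨⟨hcard, hC2⟩, _hmax⟩ := hC
  -- helper: a third vertex of C distinct from two given ones
  have hthird : ∀ x y : V, ∃ z ∈ C, z ≠ x ∧ z ≠ y := by
    intro x y
    have hsub : ¬ C ⊆ {x, y} := by
      intro hsub
      have h2 : ({x, y} : Set V).ncard ≤ 2 := by
        refine le_trans (Set.ncard_insert_le x {y}) ?_
        simp [Set.ncard_singleton]
      have := Set.ncard_le_ncard hsub ((Set.finite_singleton y).insert x)
      omega
    obtain ⟨z, hz, hz2⟩ := Set.not_subset.mp hsub
    simp only [Set.mem_insert_iff, Set.mem_singleton_iff, not_or] at hz2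
    exact ⟨z, hz, hz2.1, hz2.2⟩
  -- if u ∉ C dominates some vertex of C, it dominates every vertex of C
  have hdomOut : ∀ u x y, u ∉ C → x ∈ C → y ∈ C → Dominates E v u x → Dominates E v u y := by
    intro u x y hu hx hy hd
    obtain ⟨z, hzC, hzx, hzy⟩ := hthird x y
    have hreach : ReachIn E (C \ {z}) y x :=
      hC2 z hzC y ⟨hy, fun h => hzy (Set.mem_singleton_iff.mp h).symm⟩
        x ⟨hx, fun h => hzx (Set.mem_singleton_iff.mp h).symm⟩
    refine dom_extend hd (reach_mono ?_ hreach)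
    intro a ha
    simp only [Set.mem_compl_iff, Set.mem_singleton_iff]
    rintro rfl; exact hu ha.1
  -- if u ∈ C dominates some x ∈ C \ {u}, it dominates every y ∈ C \ {u}
  have hdomIn : ∀ u x y, u ∈ C → x ∈ C → y ∈ C → x ≠ u → y ≠ u →
      Dominates E v u x → Dominates E v u y := by
    intro u x y hu hx hy hxu hyu hd
    have hreach : ReachIn E (C \ {u}) y x :=
      hC2 u hu y ⟨hy, by simp [hyu]⟩ x ⟨hx, by simp [hxu]⟩
    refine dom_extend hd (reach_mono ?_ hreach)
    intro a ha
    simpa using ha.2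
  by_cases h1 : ∃ u ∈ C, ∃ x ∈ C, x ≠ u ∧ Dominates E v u x
  · obtain ⟨u, huC, xb, hxbC, hxbu, hdom⟩ := h1
    right
    refine ⟨u, huC, ?_⟩
    rintro x ⟨hxC, hxu⟩
    have hxu' : x ≠ u := by simpa using hxu
    refine ⟨hdomIn u xb x huC hxbC hxC hxbu hxu' hdom, Ne.symm hxu', ?_⟩
    intro d hdx hdxne
    by_cases hdu : d = u
    · exact hdu ▸ dom_self
    by_cases hdC : d ∈ C
    · exact hdomIn d x u hdC hxC huC (Ne.symm hdxne) (fun h => hdu h.symm) hdx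
    · exact hdomOut d x u hdC hxC huC hdx
  · push_neg at h1
    left
    have hx0ex : C.Nonempty := Set.nonempty_of_ncard_ne_zero (by omega)
    obtain ⟨x0, hx0⟩ := hx0ex
    have hvx0 : v ≠ x0 := fun h => hv (h ▸ hx0)
    set D : Set V := {d | Dominates E v d x0 ∧ d ≠ x0} with hDdef
    have hvD : v ∈ D := ⟨dom_start, hvx0⟩
    have hreach : ReachIn E Set.univ v x0 := hSC v (Set.mem_univ v) x0 (Set.mem_univ x0)
    obtain ⟨p0, hw0, _⟩ := walk_of_reach hreach (Set.mem_univ v)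
    have hDfin : D.Finite := by
      refine Set.Finite.subset p0.toFinset.finite_toSet ?_
      intro d hd
      simp only [Finset.coe_sort_coe, List.coe_toFinset, Set.mem_setOf_eq]
      exact hd.1 p0 hw0
    obtain ⟨w, hwmem, hwmin⟩ := exists_min (r := fun a b => Dominates E v a b)
      (fun hab hbc => dom_trans hab hbc) hDfin.toFinset
      ⟨v, hDfin.mem_toFinset.mpr hvD⟩
      (by
        intro a ha b hb hab
        rw [Set.Finite.mem_toFinset] at ha hb
        exact dom_total ha.1 hb.1 (Ne.symm ha.2) (Ne.symm hb.2) hab hreach)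
    rw [Set.Finite.mem_toFinset] at hwmem
    have hwC : w ∉ C := by
      intro hwC
      exact h1 w hwC x0 hx0 (Ne.symm hwmem.2) hwmem.1
    refine ⟨w, hwC, ?_⟩
    intro x hx
    refine ⟨hdomOut w x0 x hwC hx0 hx hwmem.1, fun h => hwC (h ▸ hx), ?_⟩
    intro d hdx hdxne
    by_cases hdw : d = w
    · exact hdw ▸ dom_self
    by_cases hdC : d ∈ C
    · exact absurd hdx (h1 d hdC x hx (Ne.symm hdxne))
    · have hd0 : Dominates E v d x0 := hdomOut d x x0 hdC hx hx0 hdx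
      have hdD : d ∈ D := ⟨hd0, fun h => hdC (h ▸ hx0)⟩
      exact hwmin d (hDfin.mem_toFinset.mpr hdD) hdw
end

section
/- Let G = (V, E) be a directed graph on n vertices and let C₁, ..., C_t be its 2-vertex-connected components. Then the sum of the sizes |C₁| + ... + |C_t| is strictly less than 3n. -/
variable {V : Type*}

section Lemmas

variable {E : V → V → Prop}

theorem reachIn_mono {S T : Set V} (hST : S ⊆ T) {u w : V}
    (h : ReachIn E S u w) : ReachIn E T u w :=
  Relation.ReflTransGen.mono (r := fun a b => a ∈ S ∧ b ∈ S ∧ E a b)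
    (p := fun a b => a ∈ T ∧ b ∈ T ∧ E a b)
    (fun a b (x : a ∈ S ∧ b ∈ S ∧ E a b) => (⟨hST x.1, hST x.2.1, x.2.2⟩ : a ∈ T ∧ b ∈ T ∧ E a b)) u w h

theorem scOn_union {A B : Set V} (hA : SCOn E A) (hB : SCOn E B)
    (hAB : (A ∩ B).Nonempty) : SCOn E (A ∪ B) := by
  obtain ⟨z, hzA, hzB⟩ := hAB
  have toZ : ∀ u ∈ A ∪ B, ReachIn E (A ∪ B) u z := by
    rintro u (hu | hu)
    · exact reachIn_mono Set.subset_union_left (hA u hu z hzA)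
    · exact reachIn_mono Set.subset_union_right (hB u hu z hzB)
  have fromZ : ∀ u ∈ A ∪ B, ReachIn E (A ∪ B) z u := by
    rintro u (hu | hu)
    · exact reachIn_mono Set.subset_union_left (hA z hzA u hu)
    · exact reachIn_mono Set.subset_union_right (hB z hzB u hu)
  intro u hu w hw
  exact (toZ u hu).trans (fromZ w hw)

theorem scOn_sdiff [Fintype V] {C : Set V} (hC : IsTwoVCSet E C) (w : V) :
    SCOn E (C \ {w}) := by
  by_cases hw : w ∈ C
  · exact hC.2 w hw
  · have hCw : C \ {w} = C := by
      ext x; simp only [Set.mem_diff, Set.mem_singleton_iff]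
      exact ⟨fun h => h.1, fun h => ⟨h, fun hx => hw (hx ▸ h)⟩⟩
    rw [hCw]
    intro u hu x hx
    have h3 : 3 ≤ C.ncard := hC.1
    have hne : (C \ {u, x}).Nonempty := by
      rw [← Set.ncard_pos (Set.toFinite _)]
      have h1 := Set.ncard_le_ncard_diff_add_ncard C {u, x} (Set.toFinite _)
      have h2 : ({u, x} : Set V).ncard ≤ 2 :=
        le_trans (Set.ncard_insert_le _ _) (by simp [Set.ncard_singleton])
      omega
    obtain ⟨y, hyC, hy⟩ := hne
    simp only [Set.mem_insert_iff, Set.mem_singleton_iff, not_or] at hy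
    have hscy := hC.2 y hyC
    have hr := hscy u ⟨hu, by simp [Ne.symm, hy.1]⟩ x ⟨hx, by simp [Ne.symm, hy.2]⟩
    exact reachIn_mono Set.diff_subset hr

theorem scOn_glue (f : V × Set V → Set V) :
    ∀ (l : List (V × Set V)), l ≠ [] → (∀ p ∈ l, SCOn E (f p)) →
      l.Chain' (fun p q => (f p ∩ f q).Nonempty) →
      SCOn E (⋃ p ∈ l, f p)
  | [], h, _, _ => absurd rfl h
  | [p], _, hSC, _ => by simpa using hSC p (by simp)
  | p :: q :: l, _, hSC, hch => by
    have hch' := (List.isChain_cons_cons.1 hch)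
    have IH := scOn_glue f (q :: l) (by simp) (fun r hr => hSC r (List.mem_cons_of_mem _ hr))
      hch'.2
    rw [show (⋃ r ∈ p :: q :: l, f r) = f p ∪ ⋃ r ∈ q :: l, f r by
      ext x; simp]
    refine scOn_union (hSC p (by simp)) IH ?_
    obtain ⟨z, hz1, hz2⟩ := hch'.1
    refine ⟨z, hz1, ?_⟩
    have : q ∈ q :: l := by simp
    exact Set.mem_biUnion this hz2

end Lemmas

section Cyc

variable {E : V → V → Prop}

/-- Adjacency relation for incidence cycles: consecutive entries `(v,C), (v',C')`
must satisfy `v' ∈ C ∩ C'`. -/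
def CycRel : (V × Set V) → (V × Set V) → Prop := fun p q => q.1 ∈ p.2 ∧ q.1 ∈ q.2

/-- A cycle in the incidence structure of the family `𝒮` of vertex sets. -/
def IsCyc (𝒮 : Finset (Set V)) (L : List (V × Set V)) : Prop :=
  2 ≤ L.length ∧ (L.map Prod.fst).Nodup ∧ (L.map Prod.snd).Nodup ∧
  (∀ p ∈ L, p.2 ∈ 𝒮) ∧ L.Chain' CycRel ∧
  ∀ p ∈ L.getLast?, ∀ q ∈ L.head?, CycRel p q

theorem isCyc_rotate {𝒮 : Finset (Set V)} {A B : List (V × Set V)}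
    (h : IsCyc 𝒮 (A ++ B)) (hB : B ≠ []) : IsCyc 𝒮 (B ++ A) := by
  obtain ⟨hlen, hf, hs, hmem, hch, hwrap⟩ := h
  rcases eq_or_ne A [] with rfl | hA
  · simpa using ⟨hlen, hf, hs, hmem, hch, hwrap⟩
  obtain ⟨hcA, hcB, hAB⟩ := List.isChain_append.1 hch
  refine ⟨by simp at hlen ⊢; omega, ?_, ?_, ?_, ?_, ?_⟩
  · rw [List.map_append] at hf ⊢; exact List.nodup_append_comm.1 hf
  · rw [List.map_append] at hs ⊢; exact List.nodup_append_comm.1 hs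
  · intro p hp; exact hmem p (by simp at hp ⊢; tauto)
  · refine List.isChain_append.2 ⟨hcB, hcA, fun x hx y hy => hwrap x ?_ y ?_⟩
    · rwa [List.getLast?_append_of_ne_nil _ hB]
    · rwa [List.head?_append_of_ne_nil _ hA]
  · intro p hp q hq
    rw [List.getLast?_append_of_ne_nil _ hA] at hp
    rw [List.head?_append_of_ne_nil _ hB] at hq
    exact hAB p hp q hq

theorem isCyc_fst_mem {𝒮 : Finset (Set V)} {L : List (V × Set V)}
    (h : IsCyc 𝒮 L) : ∀ p ∈ L, p.1 ∈ p.2 := by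
  intro p hp
  obtain ⟨A, B, rfl⟩ := List.append_of_mem hp
  obtain ⟨hlen, _, _, _, hch, hwrap⟩ := h
  rcases eq_or_ne A [] with rfl | hA
  · have hLne : (p :: B) ≠ [] := by simp
    simp only [List.nil_append] at hlen hch hwrap ⊢
    obtain ⟨q, hq⟩ := List.getLast?_isSome.2 hLne |> Option.isSome_iff_exists.1
    exact (hwrap q hq p rfl).2
  · obtain ⟨-, -, hAB⟩ := List.isChain_append.1 hch
    obtain ⟨q, hq⟩ := List.getLast?_isSome.2 hA |> Option.isSome_iff_exists.1
    exact (hAB q hq p rfl).2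

theorem chain_aux (w : V) : ∀ (L : List (V × Set V)), L.Chain' (CycRel (V := V)) →
    (∀ q ∈ L.tail, q.1 ≠ w) →
    L.Chain' (fun p q => ((p.2 \ {w}) ∩ (q.2 \ {w})).Nonempty)
  | [], _, _ => List.isChain_nil
  | [p], _, _ => List.isChain_singleton p
  | p :: q :: l, hch, hw => by
    obtain ⟨h1, h2⟩ := List.isChain_cons_cons.1 hch
    refine List.isChain_cons_cons.2 ⟨⟨q.1, ?_, ?_⟩, ?_⟩
    · exact ⟨h1.1, hw q (by simp)⟩
    · exact ⟨h1.2, hw q (by simp)⟩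
    · exact chain_aux w (q :: l) h2 (fun r hr => hw r (List.mem_cons_of_mem _ hr))

theorem isCyc_union_twoVCSet [Fintype V] {𝒮 : Finset (Set V)} {L : List (V × Set V)}
    (h2 : ∀ C ∈ 𝒮, IsTwoVCSet E C) (hL : IsCyc 𝒮 L) :
    IsTwoVCSet E (⋃ p ∈ L, p.2) := by
  constructor
  · match L, hL with
    | p :: L', hL =>
      have hsub : p.2 ⊆ ⋃ q ∈ p :: L', q.2 := by
        intro x hx
        have hp : p ∈ p :: L' := List.mem_cons_self
        exact Set.mem_biUnion hp hx
      have h3 : 3 ≤ p.2.ncard := (h2 p.2 (hL.2.2.2.1 p (by simp))).1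
      exact le_trans h3 (Set.ncard_le_ncard hsub (Set.toFinite _))
    | [], hL => exact absurd hL.1 (by simp)
  · intro w hw
    -- find a rotation L' of L with no tail vertex equal to w
    have key : ∃ L', IsCyc 𝒮 L' ∧ (⋃ p ∈ L', p.2) = (⋃ p ∈ L, p.2) ∧
        ∀ q ∈ L'.tail, q.1 ≠ w := by
      by_cases hwf : ∃ p ∈ L, p.1 = w
      · obtain ⟨p, hpL, hpw⟩ := hwf
        obtain ⟨A, B, rfl⟩ := List.append_of_mem hpL
        refine ⟨(p :: B) ++ A, isCyc_rotate hL (by simp), ?_, ?_⟩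
        · have hmm : ∀ q : V × Set V, q ∈ (p :: B) ++ A ↔ q ∈ A ++ p :: B := by
            intro q; simp only [List.mem_append, List.mem_cons]; tauto
          ext x
          simp only [Set.mem_iUnion, exists_prop]
          exact ⟨fun ⟨q, hq, hx⟩ => ⟨q, (hmm q).1 hq, hx⟩,
            fun ⟨q, hq, hx⟩ => ⟨q, (hmm q).2 hq, hx⟩⟩
        · have hf := hL.2.1
          rw [List.map_append, List.nodup_append'] at hf
          simp only [List.map_cons, List.nodup_cons] at hf
          intro q hq hqw
          have hq1 : q.1 ∈ (B.map Prod.fst) ∨ q.1 ∈ (A.map Prod.fst) := by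
            simp only [List.cons_append, List.tail_cons, List.mem_append] at hq
            rcases hq with h | h
            · exact Or.inl (List.mem_map_of_mem h)
            · exact Or.inr (List.mem_map_of_mem h)
          rw [hqw, ← hpw] at hq1
          rcases hq1 with h | h
          · exact hf.2.1.1 h
          · exact hf.2.2 h (by simp)
      · push_neg at hwf
        exact ⟨L, hL, rfl, fun q hq => hwf q (List.mem_of_mem_tail hq)⟩
    obtain ⟨L', hL', hU, htail⟩ := key
    rw [← hU]
    have hglue := scOn_glue (E := E) (fun p => p.2 \ {w}) L'
      (by intro h; rw [h] at hL'; simpa using hL'.1)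
      (fun p hp => scOn_sdiff (h2 p.2 (hL'.2.2.2.1 p hp)) w)
      (chain_aux w L' hL'.2.2.2.2.1 htail)
    have : (⋃ p ∈ L', p.2 \ {w}) = (⋃ p ∈ L', p.2) \ {w} := by
      ext x
      simp only [Set.mem_iUnion, Set.mem_diff, Set.mem_singleton_iff]
      tauto
    rwa [this] at hglue

theorem no_cyc [Fintype V] {𝒞 : Finset (Set V)} (h : ∀ C ∈ 𝒞, IsTwoVCC E C) :
    ¬ ∃ L, IsCyc (V := V) 𝒞 L := by
  rintro ⟨L, hL⟩
  match L, hL with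
  | [], hL => exact absurd hL.1 (by simp)
  | [p], hL => exact absurd hL.1 (by simp)
  | p :: q :: L', hL =>
    set U := ⋃ r ∈ p :: q :: L', r.2 with hUdef
    have hU : IsTwoVCSet E U := isCyc_union_twoVCSet (fun C hC => (h C hC).1) hL
    have hpm : p ∈ p :: q :: L' := List.mem_cons_self
    have hqm : q ∈ p :: q :: L' := List.mem_cons_of_mem _ (List.mem_cons_self)
    have hpU : p.2 ⊆ U := fun x hx => Set.mem_biUnion hpm hx
    have hqU : q.2 ⊆ U := fun x hx => Set.mem_biUnion hqm hx
    have hp𝒞 := hL.2.2.2.1 p hpm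
    have hq𝒞 := hL.2.2.2.1 q hqm
    have hUp : U = p.2 := (h p.2 hp𝒞).2 U hU hpU
    have hqp : q.2 ⊆ p.2 := hUp ▸ hqU
    have : p.2 = q.2 := (h q.2 hq𝒞).2 p.2 (h p.2 hp𝒞).1 hqp
    have hnod := hL.2.2.1
    simp [this] at hnod

end Cyc

section Merge

variable {𝒮 : Finset (Set V)}

theorem inter_subsingleton (hnc : ¬ ∃ L, IsCyc 𝒮 L)
    {C D : Set V} (hC : C ∈ 𝒮) (hD : D ∈ 𝒮) (hCD : C ≠ D) : (C ∩ D).Subsingleton := by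
  intro x hx y hy
  by_contra hxy
  apply hnc
  refine ⟨[(x, C), (y, D)], by simp, by simp [hxy], by simp [hCD], ?_, ?_, ?_⟩
  · intro p hp; simp only [List.mem_cons, List.mem_singleton] at hp
    rcases hp with rfl | rfl | h
    · exact hC
    · exact hD
    · simp at h
  · exact List.isChain_cons_cons.2 ⟨⟨hy.1, hy.2⟩, List.isChain_singleton _⟩
  · intro p hp q hq
    simp only [List.getLast?_cons_cons, List.getLast?_singleton, Option.mem_def,
      Option.some.injEq, List.head?_cons] at hp hq
    subst hp; subst hq
    exact ⟨hx.2, hx.1⟩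

/-- Helper: close a path `T` through one set `X` containing both endpoints' vertices. -/
theorem merge_helper2 {X : Set V} {u : V} {T : List (V × Set V)}
    (hX : X ∈ 𝒮) (hXT : X ∉ T.map Prod.snd) (hT : T ≠ [])
    (hchT : T.Chain' CycRel)
    (hmemT : ∀ p ∈ T, p.2 ∈ 𝒮)
    (hfst : ∀ p ∈ T, p.1 ∈ p.2)
    (hnodf : (T.map Prod.fst).Nodup) (hnods : (T.map Prod.snd).Nodup)
    (hu : u ∈ X) (huT : u ∉ T.map Prod.fst)
    (hhead : ∀ q ∈ T.head?, q.1 ∈ X)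
    (hlast : ∀ r ∈ T.getLast?, u ∈ r.2) : ∃ L, IsCyc 𝒮 L := by
  refine ⟨(u, X) :: T, ?_, ?_, ?_, ?_, ?_, ?_⟩
  · simp only [List.length_cons]
    have := List.length_pos_iff.2 hT
    omega
  · rw [List.map_cons, List.nodup_cons]; exact ⟨huT, hnodf⟩
  · rw [List.map_cons, List.nodup_cons]; exact ⟨hXT, hnods⟩
  · intro p hp
    rcases List.mem_cons.1 hp with rfl | hp
    · exact hX
    · exact hmemT p hp
  · refine List.isChain_cons.2 ⟨?_, hchT⟩
    intro q hq
    exact ⟨hhead q hq, hfst q (List.mem_of_mem_head? hq)⟩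
  · intro p hp q hq
    simp only [List.head?_cons, Option.mem_def, Option.some.injEq] at hq
    subst hq
    have : ((u, X) :: T).getLast? = T.getLast? := by
      have : (u, X) :: T = [(u, X)] ++ T := rfl
      rw [this, List.getLast?_append_of_ne_nil _ hT]
    rw [this] at hp
    exact ⟨hlast p hp, hu⟩

/-- Helper: close a path `T` via two sets `X, Y` sharing the vertex `v`. -/
theorem merge_helper {X Y : Set V} {v u : V} {T : List (V × Set V)}
    (hX : X ∈ 𝒮) (hY : Y ∈ 𝒮) (hXY : X ≠ Y)
    (hvX : v ∈ X) (hvY : v ∈ Y) (hu : u ∈ Y) (hvu : v ≠ u)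
    (hT : T ≠ [])
    (hchT : T.Chain' CycRel)
    (hmemT : ∀ p ∈ T, p.2 ∈ 𝒮)
    (hfst : ∀ p ∈ T, p.1 ∈ p.2)
    (hXT : X ∉ T.map Prod.snd) (hYT : Y ∉ T.map Prod.snd)
    (hnodf : (T.map Prod.fst).Nodup) (hnods : (T.map Prod.snd).Nodup)
    (huT : u ∉ T.map Prod.fst)
    (hhead : ∀ q ∈ T.head?, q.1 ∈ X)
    (hlast : ∀ r ∈ T.getLast?, u ∈ r.2) : ∃ L, IsCyc 𝒮 L := by
  by_cases hvT : v ∈ T.map Prod.fst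
  · -- v occurs in T : shortcut cycle  p :: T₂ ++ [(u,Y)]
    obtain ⟨p, hpT, hpv⟩ := List.mem_map.1 hvT
    obtain ⟨T₁, T₂, rfl⟩ := List.append_of_mem hpT
    have hmapf : ((T₁ ++ p :: T₂).map Prod.fst)
        = T₁.map Prod.fst ++ p.1 :: T₂.map Prod.fst := by simp
    have hmaps : ((T₁ ++ p :: T₂).map Prod.snd)
        = T₁.map Prod.snd ++ p.2 :: T₂.map Prod.snd := by simp
    rw [hmapf] at hnodf huT
    rw [hmaps] at hnods hYT
    have hf2 := (List.nodup_append'.1 hnodf).2.1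
    have hs2 := (List.nodup_append'.1 hnods).2.1
    have hpT2f : p.1 ∉ T₂.map Prod.fst := (List.nodup_cons.1 hf2).1
    have hT2f : (T₂.map Prod.fst).Nodup := (List.nodup_cons.1 hf2).2
    have hpT2s : p.2 ∉ T₂.map Prod.snd := (List.nodup_cons.1 hs2).1
    have hT2s : (T₂.map Prod.snd).Nodup := (List.nodup_cons.1 hs2).2
    have huT2 : u ∉ T₂.map Prod.fst := fun hmem =>
      huT (List.mem_append.2 (Or.inr (List.mem_cons_of_mem _ hmem)))
    have hYT2 : Y ∉ T₂.map Prod.snd := fun hmem =>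
      hYT (List.mem_append.2 (Or.inr (List.mem_cons_of_mem _ hmem)))
    have hpY : p.2 ≠ Y := fun hpy =>
      hYT (List.mem_append.2 (Or.inr (hpy ▸ List.mem_cons_self)))
    have hch2 : (p :: T₂).Chain' CycRel := (List.isChain_append.1 hchT).2.1
    have hlast2 : ∀ r ∈ (p :: T₂).getLast?, u ∈ r.2 := by
      intro r hr
      apply hlast
      rwa [List.getLast?_append_of_ne_nil _ (List.cons_ne_nil _ _)]
    refine ⟨p :: (T₂ ++ [(u, Y)]), ?_, ?_, ?_, ?_, ?_, ?_⟩
    · simp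
    · simp only [List.map_cons, List.map_append, List.map_singleton, List.map_nil]
      rw [List.nodup_cons, List.nodup_append']
      refine ⟨?_, hT2f, by simp, by simp [List.disjoint_singleton, huT2]⟩
      simp only [List.map_nil, List.mem_append, List.mem_singleton, hpv]
      rintro (h | h)
      · exact hpT2f (hpv ▸ h)
      · exact hvu h
    · simp only [List.map_cons, List.map_append, List.map_singleton, List.map_nil]
      rw [List.nodup_cons, List.nodup_append']
      refine ⟨?_, hT2s, by simp, by simp [List.disjoint_singleton, hYT2]⟩
      simp only [List.map_nil, List.mem_append, List.mem_singleton]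
      rintro (h | h)
      · exact hpT2s h
      · exact hpY h
    · intro q hq
      rcases List.mem_cons.1 hq with rfl | hq
      · exact hmemT q (List.mem_append.2 (Or.inr (List.mem_cons_self)))
      · rcases List.mem_append.1 hq with hq | hq
        · exact hmemT q (List.mem_append.2 (Or.inr (List.mem_cons_of_mem _ hq)))
        · rw [List.mem_singleton.1 hq]; exact hY
    · show ((p :: T₂) ++ [(u, Y)]).Chain' CycRel
      refine List.isChain_append.2 ⟨hch2, List.isChain_singleton _, ?_⟩
      intro x hx y hy
      simp only [List.head?_cons, Option.mem_def, Option.some.injEq] at hy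
      subst hy
      exact ⟨hlast2 x hx, hu⟩
    · intro x hx q hq
      have : (p :: (T₂ ++ [(u, Y)])).getLast? = some (u, Y) := by
        show ((p :: T₂) ++ [(u, Y)]).getLast? = some (u, Y)
        rw [List.getLast?_append_of_ne_nil _ (by simp)]; rfl
      rw [this] at hx
      simp only [Option.mem_def, Option.some.injEq, List.head?_cons] at hx hq
      subst hx; subst hq
      exact ⟨hpv ▸ hvY, hfst p hpT⟩
  · -- v does not occur in T : big cycle (v,X) :: T ++ [(u,Y)]
    refine ⟨(v, X) :: (T ++ [(u, Y)]), ?_, ?_, ?_, ?_, ?_, ?_⟩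
    · simp
    · simp only [List.map_cons, List.map_append, List.map_singleton, List.map_nil]
      rw [List.nodup_cons, List.nodup_append']
      refine ⟨?_, hnodf, by simp, by simp [List.disjoint_singleton, huT]⟩
      simp only [List.map_nil, List.mem_append, List.mem_singleton]
      rintro (h | h)
      · exact hvT h
      · exact hvu h
    · simp only [List.map_cons, List.map_append, List.map_singleton, List.map_nil]
      rw [List.nodup_cons, List.nodup_append']
      refine ⟨?_, hnods, by simp, by simp [List.disjoint_singleton, hYT]⟩
      simp only [List.map_nil, List.mem_append, List.mem_singleton]
      rintro (h | h)
      · exact hXT h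
      · exact hXY h
    · intro q hq
      rcases List.mem_cons.1 hq with rfl | hq
      · exact hX
      · rcases List.mem_append.1 hq with hq | hq
        · exact hmemT q hq
        · rw [List.mem_singleton.1 hq]; exact hY
    · refine List.isChain_cons.2 ⟨?_, ?_⟩
      · intro q hq
        rw [List.head?_append_of_ne_nil _ hT] at hq
        exact ⟨hhead q hq, hfst q (List.mem_of_mem_head? hq)⟩
      · refine List.isChain_append.2 ⟨hchT, List.isChain_singleton _, ?_⟩
        intro x hx y hy
        simp only [List.head?_cons, Option.mem_def, Option.some.injEq] at hy
        subst hy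
        exact ⟨hlast x hx, hu⟩
    · intro x hx q hq
      have : ((v, X) :: (T ++ [(u, Y)])).getLast? = some (u, Y) := by
        show (((v, X) :: T) ++ [(u, Y)]).getLast? = some (u, Y)
        rw [List.getLast?_append_of_ne_nil _ (by simp)]; rfl
      rw [this] at hx
      simp only [Option.mem_def, Option.some.injEq, List.head?_cons] at hx hq
      subst hx; subst hq
      exact ⟨hvY, hvX⟩

end Merge

section MergeMain

open scoped Classical

variable {𝒮 : Finset (Set V)}

theorem merge_no_cyc (hnc : ¬ ∃ L, IsCyc 𝒮 L) {C₁ C₂ : Set V}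
    (hC₁ : C₁ ∈ 𝒮) (hC₂ : C₂ ∈ 𝒮) (hne : C₁ ≠ C₂) {v : V}
    (hv₁ : v ∈ C₁) (hv₂ : v ∈ C₂) :
    ¬ ∃ L, IsCyc (insert (C₁ ∪ C₂) ((𝒮.erase C₁).erase C₂)) L := by
  rintro ⟨L, hL⟩
  by_cases hM : (C₁ ∪ C₂) ∈ L.map Prod.snd
  case neg =>
    apply hnc
    refine ⟨L, hL.1, hL.2.1, hL.2.2.1, ?_, hL.2.2.2.2.1, hL.2.2.2.2.2⟩
    intro p hp
    rcases Finset.mem_insert.1 (hL.2.2.2.1 p hp) with h | h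
    · exact absurd (h ▸ List.mem_map_of_mem (f := Prod.snd) hp) hM
    · exact Finset.mem_of_mem_erase (Finset.mem_of_mem_erase h)
  case pos =>
    obtain ⟨p, hpL, hpM⟩ := List.mem_map.1 hM
    obtain ⟨A, B, rfl⟩ := List.append_of_mem hpL
    have hL' : IsCyc _ ((p :: B) ++ A) := isCyc_rotate hL (by simp)
    have hLT : (p :: B) ++ A = p :: (B ++ A) := by simp
    rw [hLT] at hL'
    clear hLT hM hpL hL
    obtain ⟨T, hL'⟩ : ∃ T, IsCyc (insert (C₁ ∪ C₂) ((𝒮.erase C₁).erase C₂)) (p :: T) :=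
      ⟨B ++ A, hL'⟩
    have hfmem := isCyc_fst_mem hL'
    obtain ⟨hlen, hf, hs, hmem, hch, hwrap⟩ := hL'
    have hT : T ≠ [] := by
      intro h; rw [h] at hlen; simp at hlen
    rw [List.map_cons, List.nodup_cons] at hf hs
    have huT : p.1 ∉ T.map Prod.fst := hf.1
    have hfT : (T.map Prod.fst).Nodup := hf.2
    have hMT : (C₁ ∪ C₂) ∉ T.map Prod.snd := hpM ▸ hs.1
    have hsT : (T.map Prod.snd).Nodup := hs.2
    have hmemT : ∀ q ∈ T, q.2 ∈ (𝒮.erase C₁).erase C₂ := by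
      intro q hq
      rcases Finset.mem_insert.1 (hmem q (List.mem_cons_of_mem _ hq)) with h | h
      · exact absurd (h ▸ List.mem_map_of_mem (f := Prod.snd) hq) hMT
      · exact h
    have hmemT𝒮 : ∀ q ∈ T, q.2 ∈ 𝒮 := fun q hq =>
      Finset.mem_of_mem_erase (Finset.mem_of_mem_erase (hmemT q hq))
    have hC₁T : C₁ ∉ T.map Prod.snd := by
      intro hmem'
      obtain ⟨q, hq, hq2⟩ := List.mem_map.1 hmem'
      have := (Finset.mem_erase.1 (Finset.mem_erase.1 (hmemT q hq)).2).1
      exact this hq2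
    have hC₂T : C₂ ∉ T.map Prod.snd := by
      intro hmem'
      obtain ⟨q, hq, hq2⟩ := List.mem_map.1 hmem'
      exact (Finset.mem_erase.1 (hmemT q hq)).1 hq2
    have hfstT : ∀ q ∈ T, q.1 ∈ q.2 := fun q hq =>
      hfmem q (List.mem_cons_of_mem _ hq)
    obtain ⟨hjun, hchT⟩ := List.isChain_cons.1 hch
    have hlastT : (p :: T).getLast? = T.getLast? := by
      show ([p] ++ T).getLast? = T.getLast?
      rw [List.getLast?_append_of_ne_nil _ hT]
    have hlastu : ∀ x ∈ T.getLast?, p.1 ∈ x.2 ∧ p.1 ∈ (C₁ ∪ C₂) := by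
      intro x hx
      have := hwrap x (by rw [hlastT]; exact hx) p (by simp)
      exact ⟨this.1, hpM ▸ this.2⟩
    obtain ⟨q₀, T'', rfl⟩ : ∃ q₀ T'', T = q₀ :: T'' := by
      cases T with
      | nil => exact absurd rfl hT
      | cons a l => exact ⟨a, l, rfl⟩
    have hq₀head : (q₀ :: T'').head? = some q₀ := rfl
    have hjq₀ := hjun q₀ hq₀head
    have hq₀M : q₀.1 ∈ C₁ ∪ C₂ := hpM ▸ hjq₀.1
    obtain ⟨x₀, hx₀⟩ := Option.isSome_iff_exists.1 (List.getLast?_isSome.2 hT)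
    have huM : p.1 ∈ C₁ ∪ C₂ := (hlastu x₀ hx₀).2
    have hlast' : ∀ r ∈ (q₀ :: T'').getLast?, p.1 ∈ r.2 := fun r hr => (hlastu r hr).1
    apply hnc
    by_cases hu1 : p.1 ∈ C₁
    · by_cases hq1 : q₀.1 ∈ C₁
      · exact merge_helper2 hC₁ hC₁T hT hchT hmemT𝒮 hfstT hfT hsT hu1 huT
          (fun q hq => by rw [hq₀head, Option.mem_def, Option.some.injEq] at hq
                          subst hq; exact hq1) hlast'
      · have hq2 : q₀.1 ∈ C₂ := hq₀M.resolve_left hq1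
        by_cases hu2 : p.1 ∈ C₂
        · exact merge_helper2 hC₂ hC₂T hT hchT hmemT𝒮 hfstT hfT hsT hu2 huT
            (fun q hq => by rw [hq₀head, Option.mem_def, Option.some.injEq] at hq
                            subst hq; exact hq2) hlast'
        · exact merge_helper hC₂ hC₁ hne.symm hv₂ hv₁ hu1
            (fun hvu => hu2 (hvu ▸ hv₂)) hT hchT hmemT𝒮 hfstT hC₂T hC₁T hfT hsT huT
            (fun q hq => by rw [hq₀head, Option.mem_def, Option.some.injEq] at hq
                            subst hq; exact hq2) hlast'
    · have hu2 : p.1 ∈ C₂ := huM.resolve_left hu1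
      by_cases hq2 : q₀.1 ∈ C₂
      · exact merge_helper2 hC₂ hC₂T hT hchT hmemT𝒮 hfstT hfT hsT hu2 huT
          (fun q hq => by rw [hq₀head, Option.mem_def, Option.some.injEq] at hq
                          subst hq; exact hq2) hlast'
      · have hq1 : q₀.1 ∈ C₁ := hq₀M.resolve_right hq2
        exact merge_helper hC₁ hC₂ hne hv₁ hv₂ hu2
          (fun hvu => hu1 (hvu ▸ hv₁)) hT hchT hmemT𝒮 hfstT hC₁T hC₂T hfT hsT huT
          (fun q hq => by rw [hq₀head, Option.mem_def, Option.some.injEq] at hq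
                          subst hq; exact hq1) hlast'

end MergeMain

section Count

open scoped Classical

theorem sum_ncard_disjoint [Fintype V] (𝒮 : Finset (Set V))
    (hdisj : ∀ C₁ ∈ 𝒮, ∀ C₂ ∈ 𝒮, C₁ ≠ C₂ → C₁ ∩ C₂ = ∅) :
    ∑ C ∈ 𝒮, C.ncard ≤ (⋃₀ (𝒮 : Set (Set V))).ncard := by
  induction 𝒮 using Finset.induction with
  | empty => simp
  | @insert C 𝒮 hC IH =>
    rw [Finset.sum_insert hC, Finset.coe_insert, Set.sUnion_insert]
    have hd : Disjoint C (⋃₀ (𝒮 : Set (Set V))) := by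
      rw [Set.disjoint_sUnion_right]
      intro D hD
      rw [Set.disjoint_iff_inter_eq_empty]
      exact hdisj C (Finset.mem_insert_self _ _) D
        (Finset.mem_insert_of_mem hD) (fun hCD => hC (hCD ▸ hD))
    rw [Set.ncard_union_eq hd (Set.toFinite _) (Set.toFinite _)]
    have := IH (fun C₁ h₁ C₂ h₂ hne =>
      hdisj C₁ (Finset.mem_insert_of_mem h₁) C₂ (Finset.mem_insert_of_mem h₂) hne)
    omega

theorem count_lemma [Fintype V] :
    ∀ (n : ℕ) (𝒮 : Finset (Set V)), 𝒮.card ≤ n →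
      (∀ C ∈ 𝒮, 2 ≤ C.ncard) → (¬ ∃ L, IsCyc 𝒮 L) → 𝒮.Nonempty →
      (∑ C ∈ 𝒮, C.ncard) + 1 ≤ (⋃₀ (𝒮 : Set (Set V))).ncard + 𝒮.card := by
  intro n
  induction n with
  | zero =>
    intro 𝒮 hcard _ _ hne
    exact absurd (Finset.card_pos.2 hne) (by omega)
  | succ n IH =>
    intro 𝒮 hcard h2 hnc hne
    by_cases hint : ∃ C₁ ∈ 𝒮, ∃ C₂ ∈ 𝒮, C₁ ≠ C₂ ∧ (C₁ ∩ C₂).Nonempty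
    · obtain ⟨C₁, hC₁, C₂, hC₂, hCne, v, hv⟩ := hint
      have hv₁ : v ∈ C₁ := hv.1
      have hv₂ : v ∈ C₂ := hv.2
      have hss := inter_subsingleton hnc hC₁ hC₂ hCne
      have hint1 : (C₁ ∩ C₂).ncard = 1 := by
        rw [Set.ncard_eq_one]
        exact ⟨v, Set.eq_singleton_iff_unique_mem.2 ⟨hv, fun x hx => hss hx hv⟩⟩
      have hMcard : C₁.ncard + C₂.ncard = (C₁ ∪ C₂).ncard + 1 := by
        have := Set.ncard_union_add_ncard_inter C₁ C₂ (Set.toFinite _) (Set.toFinite _)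
        omega
      have hMnotmem : (C₁ ∪ C₂) ∉ 𝒮 := by
        intro hM
        obtain ⟨a, ha, b, hb, hab⟩ :=
          (Set.one_lt_ncard (Set.toFinite C₁)).1 (lt_of_lt_of_le one_lt_two (h2 C₁ hC₁))
        by_cases hMC : C₁ ∪ C₂ = C₁
        · have hsub : C₂ ⊆ C₁ := fun x hx => hMC ▸ Set.mem_union_right C₁ hx
          obtain ⟨a', ha', b', hb', hab'⟩ :=
            (Set.one_lt_ncard (Set.toFinite C₂)).1 (lt_of_lt_of_le one_lt_two (h2 C₂ hC₂))
          exact hab' (hss ⟨hsub ha', ha'⟩ ⟨hsub hb', hb'⟩)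
        · have hss' := inter_subsingleton hnc hM hC₁ hMC
          exact hab (hss' ⟨Set.mem_union_left _ ha, ha⟩ ⟨Set.mem_union_left _ hb, hb⟩)
      have hC₂e : C₂ ∈ 𝒮.erase C₁ := Finset.mem_erase.2 ⟨Ne.symm hCne, hC₂⟩
      have hMnot' : (C₁ ∪ C₂) ∉ (𝒮.erase C₁).erase C₂ := fun h =>
        hMnotmem (Finset.mem_of_mem_erase (Finset.mem_of_mem_erase h))
      have hcard2 : 2 ≤ 𝒮.card := Finset.one_lt_card.2 ⟨C₁, hC₁, C₂, hC₂, hCne⟩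
      have hcard' : (insert (C₁ ∪ C₂) ((𝒮.erase C₁).erase C₂)).card + 1 = 𝒮.card := by
        rw [Finset.card_insert_of_notMem hMnot', Finset.card_erase_of_mem hC₂e,
          Finset.card_erase_of_mem hC₁]
        omega
      have h2' : ∀ C ∈ insert (C₁ ∪ C₂) ((𝒮.erase C₁).erase C₂), 2 ≤ C.ncard := by
        intro C hC
        rcases Finset.mem_insert.1 hC with rfl | hC
        · exact le_trans (h2 C₁ hC₁) (Set.ncard_le_ncard Set.subset_union_left (Set.toFinite _))
        · exact h2 C (Finset.mem_of_mem_erase (Finset.mem_of_mem_erase hC))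
      have hnc' := merge_no_cyc hnc hC₁ hC₂ hCne hv₁ hv₂
      have hne' : (insert (C₁ ∪ C₂) ((𝒮.erase C₁).erase C₂)).Nonempty :=
        ⟨C₁ ∪ C₂, Finset.mem_insert_self _ _⟩
      have hUeq : ⋃₀ ((insert (C₁ ∪ C₂) ((𝒮.erase C₁).erase C₂) : Finset (Set V)) : Set (Set V))
          = ⋃₀ (𝒮 : Set (Set V)) := by
        ext x
        simp only [Finset.coe_insert, Set.sUnion_insert, Set.mem_union, Set.mem_sUnion,
          Finset.mem_coe, Finset.mem_erase]
        constructor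
        · rintro ((hx | hx) | ⟨C, ⟨hCne2, hCne1, hC⟩, hx⟩)
          · exact ⟨C₁, hC₁, hx⟩
          · exact ⟨C₂, hC₂, hx⟩
          · exact ⟨C, hC, hx⟩
        · rintro ⟨C, hC, hx⟩
          by_cases e1 : C = C₁
          · exact Or.inl (Or.inl (e1 ▸ hx))
          · by_cases e2 : C = C₂
            · exact Or.inl (Or.inr (e2 ▸ hx))
            · exact Or.inr ⟨C, ⟨e2, e1, hC⟩, hx⟩
      have hsum' : (∑ C ∈ insert (C₁ ∪ C₂) ((𝒮.erase C₁).erase C₂), C.ncard) + 1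
          = ∑ C ∈ 𝒮, C.ncard := by
        rw [Finset.sum_insert hMnot']
        have e1 : C₂.ncard + ∑ C ∈ (𝒮.erase C₁).erase C₂, C.ncard
            = ∑ C ∈ 𝒮.erase C₁, C.ncard := Finset.add_sum_erase _ _ hC₂e
        have e2 : C₁.ncard + ∑ C ∈ 𝒮.erase C₁, C.ncard
            = ∑ C ∈ 𝒮, C.ncard := Finset.add_sum_erase _ _ hC₁
        omega
      have hIH := IH (insert (C₁ ∪ C₂) ((𝒮.erase C₁).erase C₂)) (by omega) h2' hnc' hne'
      rw [hUeq] at hIH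
      omega
    · push_neg at hint
      have h1 := sum_ncard_disjoint 𝒮 hint
      have := Finset.card_pos.2 hne
      omega

end Count


/-- The sum of the sizes of the 2-vertex-connected components of a digraph on `n ≥ 1`
vertices is strictly less than `3 n`. -/
theorem stmt13 [Fintype V] [Nonempty V] (E : V → V → Prop) (𝒞 : Finset (Set V))
    (h : ∀ C ∈ 𝒞, IsTwoVCC E C) :
    ∑ C ∈ 𝒞, C.ncard < 3 * Fintype.card V := by
  classical
  have hn : 1 ≤ Fintype.card V := Fintype.card_pos
  rcases 𝒞.eq_empty_or_nonempty with rfl | hne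
  · simp; omega
  · have hnc := no_cyc (E := E) h
    have h2 : ∀ C ∈ 𝒞, 2 ≤ C.ncard := fun C hC =>
      le_trans (by norm_num) (h C hC).1.1
    have hcount := count_lemma 𝒞.card 𝒞 le_rfl h2 hnc hne
    have hU : (⋃₀ (𝒞 : Set (Set V))).ncard ≤ Fintype.card V := by
      have huniv : (Set.univ : Set V).ncard = Fintype.card V := by
        rw [Set.ncard_univ, Nat.card_eq_fintype_card]
      rw [← huniv]
      exact Set.ncard_le_ncard (Set.subset_univ _) (Set.toFinite _)
    have h3t : 3 * 𝒞.card ≤ ∑ C ∈ 𝒞, C.ncard := by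
      calc 3 * 𝒞.card = ∑ _C ∈ 𝒞, 3 := by rw [Finset.sum_const, smul_eq_mul, mul_comm]
        _ ≤ _ := Finset.sum_le_sum (fun C hC => (h C hC).1.1)
    omega
end
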